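/- arXiv:2002.11185 — 8 statements merged into one kernel-verified Lean document; each statement's English description precedes it below -/
import Mathlib

section
/- Let a1, a2, γ1, γ2 be positive reals and P ≥ 0. There exist P1, P2 ≥ 0 with P1 + P2 = P such that P1·a1 ≥ γ1 and P2·a_k/(1 + P1·a_k) ≥ γ2 for both k = 1 and k = 2, if and only if P ≥ γ1·(1+γ2)/a1 + γ2/min(a1, a2). (This identifies the minimal total transmit power P_min = γ1(1+γ2)/a1 + γ2/min(a1,a2) guaranteeing both users' SINR requirements.) -/
/-- In the two-user NOMA downlink with effective channel gains
`a1, a2 > 0` and SINR requirements `γ1, γ2 > 0`, a total power `P ≥ 0` can be split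
into `P1 + P2 = P` meeting both users' SINR constraints iff
`P ≥ γ1(1+γ2)/a1 + γ2/min(a1,a2)`. -/
theorem noma_min_power_iff (a1 a2 γ1 γ2 P : ℝ)
    (ha1 : 0 < a1) (ha2 : 0 < a2) (hγ1 : 0 < γ1) (hγ2 : 0 < γ2) (hP : 0 ≤ P) :
    (∃ P1 P2 : ℝ, 0 ≤ P1 ∧ 0 ≤ P2 ∧ P1 + P2 = P ∧
        γ1 ≤ P1 * a1 ∧
        γ2 ≤ P2 * a1 / (1 + P1 * a1) ∧
        γ2 ≤ P2 * a2 / (1 + P1 * a2)) ↔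
      γ1 * (1 + γ2) / a1 + γ2 / min a1 a2 ≤ P := by
  have hm : 0 < min a1 a2 := lt_min ha1 ha2
  constructor
  · rintro ⟨P1, P2, hP1, hP2, hsum, h1, h2, h3⟩
    have d1 : 0 < 1 + P1 * a1 := by positivity
    have d2 : 0 < 1 + P1 * a2 := by positivity
    rw [le_div_iff₀ d1] at h2
    rw [le_div_iff₀ d2] at h3
    have key1 : γ1 * (1 + γ2) / a1 ≤ (1 + γ2) * P1 := by
      rw [div_le_iff₀ ha1]; nlinarith
    have key2 : γ2 / min a1 a2 ≤ P2 - γ2 * P1 := by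
      rcases min_cases a1 a2 with ⟨hmin, _⟩ | ⟨hmin, _⟩ <;>
        rw [hmin, div_le_iff₀ (by positivity)]
      · nlinarith
      · nlinarith
    linarith
  · intro h
    have hq : γ1 / a1 * a1 = γ1 := div_mul_cancel₀ _ (ne_of_gt ha1)
    have hsplit : γ1 * (1 + γ2) / a1 = γ1 / a1 + γ1 * γ2 / a1 := by
      field_simp
    have hmin1 : γ2 / a1 ≤ γ2 / min a1 a2 := by
      gcongr
      exact min_le_left _ _
    have hmin2 : γ2 / a2 ≤ γ2 / min a1 a2 := by
      gcongr
      exact min_le_right _ _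
    have hq2 : γ1 * γ2 / a1 * a1 = γ1 * γ2 := div_mul_cancel₀ _ (ne_of_gt ha1)
    have hq3 : γ2 / a1 * a1 = γ2 := div_mul_cancel₀ _ (ne_of_gt ha1)
    have hq4 : γ2 / a2 * a2 = γ2 := div_mul_cancel₀ _ (ne_of_gt ha2)
    have hP2 : γ1 * γ2 / a1 + γ2 / min a1 a2 ≤ P - γ1 / a1 := by linarith
    have hP2pos : 0 ≤ P - γ1 / a1 := by
      have h0 : 0 < γ1 * γ2 / a1 + γ2 / min a1 a2 := by positivity
      linarith
    refine ⟨γ1 / a1, P - γ1 / a1, by positivity, hP2pos, by ring, ?_, ?_, ?_⟩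
    · rw [hq]
    · rw [le_div_iff₀ (by positivity)]
      have key : γ1 * γ2 / a1 + γ2 / a1 ≤ P - γ1 / a1 := by linarith
      have := mul_le_mul_of_nonneg_right key ha1.le
      nlinarith
    · rw [le_div_iff₀ (by positivity)]
      have key : γ1 * γ2 / a1 + γ2 / a2 ≤ P - γ1 / a1 := by linarith
      have hmul := mul_le_mul_of_nonneg_right key ha2.le
      have expand : (γ1 * γ2 / a1 + γ2 / a2) * a2 = γ1 * γ2 / a1 * a2 + γ2 := by
        rw [add_mul, hq4]
      have e : γ2 * (γ1 / a1 * a2) = γ1 * γ2 / a1 * a2 := by ring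
      nlinarith
end

section
/- With the notation of the CB-NOMA model, the conditional average minimal transmit power satisfies the lower bound E_t[P_min] ≥ P̃_lo(t); that is, ∫_t^1 ∫_0^∞ ∫_0^∞ P_min(x,y,z)·g(x)·g(y)·b_t(z) dx dy dz ≥ γ1(1+γ2)/((M−1)·β1) + (γ2/((1−t)^(M−1)·β2))·∫_t^1 (1−z)^(M−2)/z dz. -/
/-!
Since `γ₂ / c ≤ γ₂ / min (β₁ x) c ≤ γ₂ / (β₁ x) + γ₂ / c`, the power `P_min` lies between two
functions of the form `a / x + b / (y z) + const`. Their Gamma(M) averages over `x` and `y` are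
explicit because `E[1/x] = 1/(M-1)`, and averaging the lower one against `b_t` gives `P̃_lo(t)`.
The upper one makes every partial integral an integral of an integrable function, so the
lower bound can be integrated one variable at a time.
-/

open MeasureTheory Set

open scoped Nat

noncomputable section

def gammaDensity (n : ℕ) (x : ℝ) : ℝ := x ^ n * Real.exp (-x) / n !

/-- `P_min` with `A = γ₁ (1 + γ₂)`, `β = β₁` and `c = β₂ y z`. -/
def minPower (A β γ c x : ℝ) : ℝ := A / (β * x) + γ / min (β * x) c

/-- The density `b_t` of the squared correlation, for `M = n + 2` antennas. -/
def corrDensity (n : ℕ) (t z : ℝ) : ℝ := (n + 1) * (1 - z) ^ n / (1 - t) ^ (n + 1)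

end

lemma integrableOn_pow_mul_exp_neg (n : ℕ) :
    IntegrableOn (fun x : ℝ => x ^ n * Real.exp (-x)) (Ioi 0) := by
  refine (Real.GammaIntegral_convergent (s := n + 1) (by positivity)).congr_fun
    (fun x _ => ?_) measurableSet_Ioi
  simp [mul_comm]

lemma integral_pow_mul_exp_neg (n : ℕ) :
    ∫ x in Ioi (0 : ℝ), x ^ n * Real.exp (-x) = n ! := by
  rw [← Real.Gamma_nat_eq_factorial, Real.Gamma_eq_integral (by positivity)]
  refine setIntegral_congr_fun measurableSet_Ioi fun x _ => ?_
  simp [mul_comm]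

section GammaDensity

variable {n : ℕ}

@[fun_prop]
lemma measurable_gammaDensity : Measurable (gammaDensity n) := by
  unfold gammaDensity; fun_prop

lemma gammaDensity_nonneg {x : ℝ} (hx : 0 ≤ x) : 0 ≤ gammaDensity n x := by
  unfold gammaDensity; positivity

lemma integrableOn_gammaDensity (n : ℕ) : IntegrableOn (gammaDensity n) (Ioi 0) :=
  (integrableOn_pow_mul_exp_neg n).div_const _

lemma integral_gammaDensity (n : ℕ) : ∫ x in Ioi (0 : ℝ), gammaDensity n x = 1 := by
  simp only [gammaDensity, integral_div, integral_pow_mul_exp_neg]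
  exact div_self (by positivity)

lemma inv_mul_gammaDensity_succ {x : ℝ} (hx : x ≠ 0) :
    x⁻¹ * gammaDensity (n + 1) x = gammaDensity n x / (n + 1) := by
  simp only [gammaDensity, Nat.factorial_succ, Nat.cast_mul, pow_succ]
  push_cast
  field_simp

lemma div_add_mul_gammaDensity_eqOn (a c : ℝ) :
    EqOn (fun x => (a / x + c) * gammaDensity (n + 1) x)
      (fun x => a / (n + 1) * gammaDensity n x + c * gammaDensity (n + 1) x) (Ioi 0) := by
  intro x hx
  simp only [add_mul, div_eq_mul_inv a, mul_assoc, inv_mul_gammaDensity_succ (ne_of_gt hx)]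
  ring

lemma integrableOn_div_add_mul_gammaDensity (a c : ℝ) :
    IntegrableOn (fun x => (a / x + c) * gammaDensity (n + 1) x) (Ioi 0) := by
  have h : IntegrableOn
      (fun x => a / (n + 1) * gammaDensity n x + c * gammaDensity (n + 1) x) (Ioi 0) :=
    ((integrableOn_gammaDensity _).const_mul _).add ((integrableOn_gammaDensity _).const_mul _)
  exact h.congr_fun (div_add_mul_gammaDensity_eqOn a c).symm measurableSet_Ioi

lemma integral_div_add_mul_gammaDensity (a c : ℝ) :
    ∫ x in Ioi (0 : ℝ), (a / x + c) * gammaDensity (n + 1) x = a / (n + 1) + c := by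
  rw [setIntegral_congr_fun measurableSet_Ioi (div_add_mul_gammaDensity_eqOn a c),
    integral_add ((integrableOn_gammaDensity _).const_mul _)
      ((integrableOn_gammaDensity _).const_mul _),
    integral_const_mul, integral_const_mul, integral_gammaDensity, integral_gammaDensity,
    mul_one, mul_one]

end GammaDensity

lemma setIntegral_mem_Icc_of_forall_mem_Icc {α : Type*} [MeasurableSpace α] {μ : Measure α}
    {s : Set α} (hs : MeasurableSet s) {f lo hi : α → ℝ}
    (hf : AEStronglyMeasurable f (μ.restrict s)) (hlo : IntegrableOn lo s μ)
    (hhi : IntegrableOn hi s μ) (h : ∀ x ∈ s, f x ∈ Icc (lo x) (hi x)) :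
    ∫ x in s, f x ∂μ ∈ Icc (∫ x in s, lo x ∂μ) (∫ x in s, hi x ∂μ) := by
  have hf_int : IntegrableOn f s μ := integrable_of_le_of_le hf
    ((ae_restrict_iff' hs).2 (ae_of_all _ fun x hx => (h x hx).1))
    ((ae_restrict_iff' hs).2 (ae_of_all _ fun x hx => (h x hx).2)) hlo hhi
  exact ⟨setIntegral_mono_on hlo hf_int hs fun x hx => (h x hx).1,
    setIntegral_mono_on hf_int hhi hs fun x hx => (h x hx).2⟩

lemma div_min_le_div_add_div {γ a b : ℝ} (hγ : 0 ≤ γ) (ha : 0 < a) (hb : 0 < b) :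
    γ / min a b ≤ γ / a + γ / b := by
  rcases min_choice a b with h | h <;> rw [h] <;>
    linarith [div_nonneg hγ ha.le, div_nonneg hγ hb.le]

section MinPower

variable {n : ℕ} {A β β' γ c z : ℝ}

lemma minPower_mem_Icc (hβ : 0 < β) (hγ : 0 ≤ γ) (hc : 0 < c) {x : ℝ} (hx : 0 < x) :
    minPower A β γ c x ∈ Icc (A / β / x + γ / c) ((A + γ) / β / x + γ / c) := by
  have hβx : 0 < β * x := mul_pos hβ hx
  unfold minPower
  rw [div_div, div_div, add_div]
  constructor
  · exact add_le_add_right (div_le_div_of_nonneg_left hγ (lt_min hβx hc) (min_le_right _ _)) _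
  · linarith [div_min_le_div_add_div hγ hβx hc]

lemma measurable_integral_minPower_mul_gammaDensity :
    Measurable fun c => ∫ x in Ioi (0 : ℝ), minPower A β γ c x * gammaDensity n x := by
  have h : Measurable fun p : ℝ × ℝ => minPower A β γ p.1 p.2 * gammaDensity n p.2 := by
    unfold minPower; fun_prop
  exact h.stronglyMeasurable.integral_prod_right'.measurable

lemma integral_minPower_mul_gammaDensity_mem_Icc (hβ : 0 < β) (hγ : 0 ≤ γ) (hc : 0 < c) :
    ∫ x in Ioi (0 : ℝ), minPower A β γ c x * gammaDensity (n + 1) x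
      ∈ Icc (γ / c + A / β / (n + 1)) (γ / c + (A + γ) / β / (n + 1)) := by
  rw [add_comm (γ / c), add_comm (γ / c), ← integral_div_add_mul_gammaDensity,
    ← integral_div_add_mul_gammaDensity]
  refine setIntegral_mem_Icc_of_forall_mem_Icc measurableSet_Ioi
    (by unfold minPower; fun_prop) (integrableOn_div_add_mul_gammaDensity _ _)
    (integrableOn_div_add_mul_gammaDensity _ _) fun x (hx : 0 < x) => ?_
  have hg := gammaDensity_nonneg (n := n + 1) hx.le
  obtain ⟨hlo, hhi⟩ := minPower_mem_Icc hβ hγ hc hx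
  exact ⟨mul_le_mul_of_nonneg_right hlo hg, mul_le_mul_of_nonneg_right hhi hg⟩

lemma integral_integral_minPower_mul_gammaDensity_mem_Icc (hβ : 0 < β) (hβ' : 0 < β')
    (hγ : 0 ≤ γ) (hz : 0 < z) :
    ∫ y in Ioi (0 : ℝ), (∫ x in Ioi (0 : ℝ), minPower A β γ (β' * y * z) x
        * gammaDensity (n + 1) x) * gammaDensity (n + 1) y
      ∈ Icc ((γ / β' / z + A / β) / (n + 1)) ((γ / β' / z + (A + γ) / β) / (n + 1)) := by
  rw [add_div, add_div, ← integral_div_add_mul_gammaDensity, ← integral_div_add_mul_gammaDensity]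
  refine setIntegral_mem_Icc_of_forall_mem_Icc measurableSet_Ioi
    ((measurable_integral_minPower_mul_gammaDensity.comp (by fun_prop)).mul
      measurable_gammaDensity).aestronglyMeasurable
    (integrableOn_div_add_mul_gammaDensity _ _)
    (integrableOn_div_add_mul_gammaDensity _ _) fun y (hy : 0 < y) => ?_
  have hg := gammaDensity_nonneg (n := n + 1) hy.le
  obtain ⟨hlo, hhi⟩ := integral_minPower_mul_gammaDensity_mem_Icc (A := A) (n := n) hβ hγ
    (by positivity : 0 < β' * y * z)
  rw [show γ / (β' * y * z) = γ / β' / z / y by ring] at hlo hhi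
  exact ⟨mul_le_mul_of_nonneg_right hlo hg, mul_le_mul_of_nonneg_right hhi hg⟩

lemma measurable_integral_integral_minPower_mul_gammaDensity :
    Measurable fun z => ∫ y in Ioi (0 : ℝ), (∫ x in Ioi (0 : ℝ), minPower A β γ (β' * y * z) x
        * gammaDensity n x) * gammaDensity n y := by
  have h : Measurable fun p : ℝ × ℝ => (∫ x in Ioi (0 : ℝ),
      minPower A β γ (β' * p.2 * p.1) x * gammaDensity n x) * gammaDensity n p.2 :=
    (measurable_integral_minPower_mul_gammaDensity.comp (by fun_prop)).mul (by fun_prop)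
  exact h.stronglyMeasurable.integral_prod_right'.measurable

end MinPower

section CorrDensity

variable {n : ℕ} {t : ℝ}

lemma corrDensity_nonneg (ht : t ≤ 1) {z : ℝ} (hz : z ≤ 1) : 0 ≤ corrDensity n t z := by
  unfold corrDensity
  have := sub_nonneg.2 ht
  have := sub_nonneg.2 hz
  positivity

lemma integral_pow_one_sub (n : ℕ) (t : ℝ) :
    ∫ z in t..1, (1 - z) ^ n = (1 - t) ^ (n + 1) / (n + 1) := by
  simp [intervalIntegral.integral_comp_sub_left fun z => z ^ n]

lemma integrableOn_div_add_mul_corrDensity (ht : 0 < t) (a b : ℝ) :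
    IntegrableOn (fun z => (a / z + b) / (n + 1) * corrDensity n t z) (Icc t 1) := by
  refine ContinuousOn.integrableOn_Icc (ContinuousOn.mul ?_ ?_)
  · exact ((continuousOn_const.div continuousOn_id fun z hz => (ht.trans_le hz.1).ne').add
      continuousOn_const).div_const _
  · exact (Continuous.div_const (by fun_prop) _).continuousOn

lemma integral_div_add_mul_corrDensity (ht0 : 0 < t) (ht1 : t < 1) (a b : ℝ) :
    ∫ z in t..1, (a / z + b) / (n + 1) * corrDensity n t z
      = b / (n + 1) + a / (1 - t) ^ (n + 1) * ∫ z in t..1, (1 - z) ^ n / z := by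
  have hz : ∀ z ∈ uIcc t 1, z ≠ 0 := fun z hz =>
    (ht0.trans_le (uIcc_of_le ht1.le ▸ hz).1).ne'
  have h1t : (1 - t) ^ (n + 1) ≠ 0 := pow_ne_zero _ (sub_ne_zero.2 ht1.ne')
  have hsplit : EqOn (fun z => (a / z + b) / (n + 1) * corrDensity n t z)
      (fun z => b / (1 - t) ^ (n + 1) * (1 - z) ^ n + a / (1 - t) ^ (n + 1) * ((1 - z) ^ n / z))
      (uIcc t 1) := by
    intro z hz'
    have := hz z hz'
    unfold corrDensity
    field_simp
    ring
  have hint : IntervalIntegrable (fun z => (1 - z) ^ n / z) volume t 1 :=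
    ContinuousOn.intervalIntegrable (by fun_prop (disch := exact hz))
  rw [intervalIntegral.integral_congr hsplit, intervalIntegral.integral_add
    ((Continuous.intervalIntegrable (by fun_prop) _ _).const_mul _) (hint.const_mul _),
    intervalIntegral.integral_const_mul, intervalIntegral.integral_const_mul,
    integral_pow_one_sub]
  field_simp

end CorrDensity

theorem cbnoma_avg_power_lower_bound_general (M : ℕ) (hM : 2 ≤ M)
    (β1 β2 γ1 γ2 t : ℝ) (hβ : β2 ≤ β1) (hβ2 : 0 < β2)
    (hγ2 : 0 < γ2) (ht0 : 0 < t) (ht1 : t < 1) :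
    γ1 * (1 + γ2) / (((M : ℝ) - 1) * β1)
        + (γ2 / ((1 - t) ^ (M - 1) * β2)) * (∫ z in t..1, (1 - z) ^ (M - 2) / z)
      ≤ ∫ z in t..1, ∫ y in Ioi (0 : ℝ), ∫ x in Ioi (0 : ℝ),
          (γ1 * (1 + γ2) / (β1 * x) + γ2 / min (β1 * x) (β2 * y * z))
            * (x ^ (M - 1) * Real.exp (-x) / (Nat.factorial (M - 1) : ℝ))
            * (y ^ (M - 1) * Real.exp (-y) / (Nat.factorial (M - 1) : ℝ))
            * (((M : ℝ) - 1) * (1 - z) ^ (M - 2) / (1 - t) ^ (M - 1)) := by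
  obtain ⟨n, rfl⟩ : ∃ n, M = n + 2 := ⟨M - 2, by omega⟩
  have hβ1 : 0 < β1 := hβ2.trans_le hβ
  have hcast : ((n + 2 : ℕ) : ℝ) - 1 = n + 1 := by push_cast; ring
  simp only [show n + 2 - 1 = n + 1 by omega, Nat.add_sub_cancel, hcast, integral_mul_const]
  set A := γ1 * (1 + γ2)
  have hbounds : ∀ z ∈ Ioc t 1,
      (∫ y in Ioi (0 : ℝ), (∫ x in Ioi (0 : ℝ), minPower A β1 γ2 (β2 * y * z) x
        * gammaDensity (n + 1) x) * gammaDensity (n + 1) y) * corrDensity n t z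
      ∈ Icc ((γ2 / β2 / z + A / β1) / (n + 1) * corrDensity n t z)
        ((γ2 / β2 / z + (A + γ2) / β1) / (n + 1) * corrDensity n t z) := by
    intro z hz
    have hw := corrDensity_nonneg (n := n) ht1.le hz.2
    obtain ⟨hlo, hhi⟩ := integral_integral_minPower_mul_gammaDensity_mem_Icc (n := n) (A := A)
      hβ1 hβ2 hγ2.le (ht0.trans hz.1)
    exact ⟨mul_le_mul_of_nonneg_right hlo hw, mul_le_mul_of_nonneg_right hhi hw⟩
  calc _ = ∫ z in t..1, (γ2 / β2 / z + A / β1) / (n + 1) * corrDensity n t z := by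
        rw [integral_div_add_mul_corrDensity ht0 ht1, div_div, div_div, mul_comm β1, mul_comm β2]
    _ ≤ _ := by
      simp only [intervalIntegral.integral_of_le ht1.le]
      exact (setIntegral_mem_Icc_of_forall_mem_Icc measurableSet_Ioc
          ((measurable_integral_integral_minPower_mul_gammaDensity.mul
            (by unfold corrDensity; fun_prop)).aestronglyMeasurable)
          ((integrableOn_div_add_mul_corrDensity ht0 _ _).mono_set Ioc_subset_Icc_self)
          ((integrableOn_div_add_mul_corrDensity ht0 _ _).mono_set Ioc_subset_Icc_self)
          hbounds).1

/-- CB-NOMA lower bound on the conditional average minimal transmit power: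
`E_t[P_min] ≥ P̃_lo(t)`. -/
theorem cbnoma_avg_power_lower_bound (M : ℕ) (hM : 2 ≤ M)
    (β1 β2 γ1 γ2 t : ℝ) (hβ : β2 ≤ β1) (hβ2 : 0 < β2)
    (hγ1 : 0 < γ1) (hγ2 : 0 < γ2) (ht0 : 0 < t) (ht1 : t < 1) :
    γ1 * (1 + γ2) / (((M : ℝ) - 1) * β1)
        + (γ2 / ((1 - t) ^ (M - 1) * β2)) * (∫ z in t..1, (1 - z) ^ (M - 2) / z)
      ≤ ∫ z in t..1, ∫ y in Ioi (0 : ℝ), ∫ x in Ioi (0 : ℝ),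
          (γ1 * (1 + γ2) / (β1 * x) + γ2 / min (β1 * x) (β2 * y * z))
            * (x ^ (M - 1) * Real.exp (-x) / (Nat.factorial (M - 1) : ℝ))
            * (y ^ (M - 1) * Real.exp (-y) / (Nat.factorial (M - 1) : ℝ))
            * (((M : ℝ) - 1) * (1 - z) ^ (M - 2) / (1 - t) ^ (M - 1)) :=
  cbnoma_avg_power_lower_bound_general M hM β1 β2 γ1 γ2 t hβ hβ2 hγ2 ht0 ht1
end

section
/- For every integer M ≥ 2, the function t ↦ (1/(1−t)^(M−1)) · ∫_t^1 (1−z)^(M−2)/z dz is strictly decreasing on the interval (0,1). Consequently, P̃_lo(t) = γ1(1+γ2)/((M−1)·β1) + (γ2/((1−t)^(M−1)·β2))·∫_t^1 (1−z)^(M−2)/z dz is strictly decreasing in the threshold t for any β1, β2, γ1, γ2 > 0. -/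
/-!
The substitution `z = t + (1 - t) s` gives
`∫ z in t..1, (1 - z)^n / z = (1 - t)^(n+1) ∫ s in 0..1, (1 - s)^n / ((1 - t) s + t)`,
and the last integrand is strictly decreasing in `t` because `(1 - t) s + t = s + t (1 - s)`.
So `(1 - t)^(-k) ∫ z in t..1, (1 - z)^n / z` is that strictly decreasing positive integral
times the nonincreasing factor `(1 - t)^(n+1-k)`, and `P̃_lo` is a positive multiple of it
plus a constant.
-/

open Set MeasureTheory intervalIntegral

theorem one_sub_mul_add_pos {u s : ℝ} (hu : 0 < u) (hs : s ∈ Icc (0 : ℝ) 1) :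
    0 < (1 - u) * s + u := by
  rcases le_total u 1 with h | h <;> nlinarith [hs.1, hs.2]

section

variable (n : ℕ)

theorem integral_one_sub_pow_div_eq_mul_integral {t : ℝ} (ht : t ≠ 1) :
    ∫ z in t..1, (1 - z) ^ n / z
      = (1 - t) ^ (n + 1) * ∫ s in 0..1, (1 - s) ^ n / ((1 - t) * s + t) := by
  have hc : 1 - t ≠ 0 := sub_ne_zero.mpr ht.symm
  have hsubst := integral_comp_mul_add (a := 0) (b := 1) (fun z => (1 - z) ^ n / z) hc t
  have hintegrand : ∀ s : ℝ, (1 - ((1 - t) * s + t)) ^ n / ((1 - t) * s + t)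
      = (1 - t) ^ n * ((1 - s) ^ n / ((1 - t) * s + t)) := fun s => by
    rw [show 1 - ((1 - t) * s + t) = (1 - t) * (1 - s) by ring, mul_pow, mul_div_assoc]
  simp only [hintegrand, intervalIntegral.integral_const_mul, mul_zero, zero_add, mul_one,
    sub_add_cancel, smul_eq_mul] at hsubst
  rw [pow_succ', mul_assoc, hsubst, mul_inv_cancel_left₀ hc]

variable {n}

theorem continuousOn_one_sub_pow_div {u : ℝ} (hu : 0 < u) :
    ContinuousOn (fun s : ℝ => (1 - s) ^ n / ((1 - u) * s + u)) (Icc 0 1) :=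
  ContinuousOn.div (by fun_prop) (by fun_prop) fun _ hs => (one_sub_mul_add_pos hu hs).ne'

variable (n)

theorem strictAntiOn_integral_one_sub_pow_div :
    StrictAntiOn (fun u : ℝ => ∫ s in 0..1, (1 - s) ^ n / ((1 - u) * s + u)) (Ioi 0) := by
  intro u hu v hv huv
  apply integral_lt_integral_of_continuousOn_of_le_of_exists_lt zero_lt_one
    (continuousOn_one_sub_pow_div hv) (continuousOn_one_sub_pow_div hu)
  · intro s hs
    exact div_le_div_of_nonneg_left (pow_nonneg (by linarith [hs.2]) n)
      (one_sub_mul_add_pos hu (Ioc_subset_Icc_self hs)) (by nlinarith [hs.2])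
  · exact ⟨0, left_mem_Icc.mpr zero_le_one, by simpa using (inv_lt_inv₀ hv hu).mpr huv⟩

theorem integral_one_sub_pow_div_nonneg {u : ℝ} (hu : 0 < u) :
    0 ≤ ∫ s in 0..1, (1 - s) ^ n / ((1 - u) * s + u) :=
  integral_nonneg zero_le_one fun s hs =>
    div_nonneg (pow_nonneg (by linarith [hs.2]) n) (one_sub_mul_add_pos hu hs).le

theorem strictAntiOn_one_div_pow_mul_integral {k : ℕ} (hk : k ≤ n + 1) :
    StrictAntiOn (fun t : ℝ => 1 / (1 - t) ^ k * ∫ z in t..1, (1 - z) ^ n / z) (Ioo 0 1) := by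
  obtain ⟨m, hm⟩ := Nat.exists_eq_add_of_le hk
  set Φ := fun u : ℝ => ∫ s in 0..1, (1 - s) ^ n / ((1 - u) * s + u)
  have hrepr : EqOn (fun t : ℝ => (1 - t) ^ m * Φ t)
      (fun t : ℝ => 1 / (1 - t) ^ k * ∫ z in t..1, (1 - z) ^ n / z) (Ioo 0 1) := by
    intro t ht
    have h1t : (1 - t) ^ k ≠ 0 := pow_ne_zero _ (by linarith [ht.2])
    simp only [integral_one_sub_pow_div_eq_mul_integral n ht.2.ne, hm, pow_add, Φ]
    field_simp
  refine StrictAntiOn.congr (fun s hs t ht hst => ?_) hrepr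
  calc (1 - t) ^ m * Φ t < (1 - t) ^ m * Φ s :=
        mul_lt_mul_of_pos_left (strictAntiOn_integral_one_sub_pow_div n hs.1 ht.1 hst)
          (pow_pos (by linarith [ht.2]) m)
    _ ≤ (1 - s) ^ m * Φ s :=
        mul_le_mul_of_nonneg_right (pow_le_pow_left₀ (by linarith [ht.2]) (by linarith) m)
          (integral_one_sub_pow_div_nonneg n hs.1)

end

theorem cbnoma_Plo_strictAntiOn_general (M : ℕ) :
    StrictAntiOn
      (fun t : ℝ => (1 / (1 - t) ^ (M - 1)) * ∫ z in t..1, (1 - z) ^ (M - 2) / z)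
      (Ioo 0 1)
    ∧ ∀ β1 β2 γ1 γ2 : ℝ, 0 < β1 → 0 < β2 → 0 < γ1 → 0 < γ2 →
        StrictAntiOn
          (fun t : ℝ => γ1 * (1 + γ2) / (((M : ℝ) - 1) * β1)
            + (γ2 / ((1 - t) ^ (M - 1) * β2)) * ∫ z in t..1, (1 - z) ^ (M - 2) / z)
          (Ioo 0 1) := by
  have hfactor := strictAntiOn_one_div_pow_mul_integral (M - 2) (k := M - 1) (by omega)
  refine ⟨hfactor, fun _ β2 _ γ2 _ hβ2 _ hγ2 s hs t ht hst => ?_⟩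
  have hscale : ∀ u : ℝ, γ2 / ((1 - u) ^ (M - 1) * β2) * ∫ z in u..1, (1 - z) ^ (M - 2) / z
      = γ2 / β2 * (1 / (1 - u) ^ (M - 1) * ∫ z in u..1, (1 - z) ^ (M - 2) / z) := fun u => by
    ring
  simp only [hscale]
  exact add_lt_add_right (mul_lt_mul_of_pos_left (hfactor hs ht hst) (div_pos hγ2 hβ2)) _

/-- the threshold-dependent factor
`t ↦ (1/(1−t)^(M−1)) ∫_t^1 (1−z)^(M−2)/z dz` is strictly decreasing on `(0,1)`,
and consequently so is `P̃_lo(t)` for any positive `β1, β2, γ1, γ2`. -/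
theorem cbnoma_Plo_strictAntiOn (M : ℕ) (hM : 2 ≤ M) :
    StrictAntiOn
      (fun t : ℝ => (1 / (1 - t) ^ (M - 1)) * ∫ z in t..1, (1 - z) ^ (M - 2) / z)
      (Ioo 0 1)
    ∧ ∀ β1 β2 γ1 γ2 : ℝ, 0 < β1 → 0 < β2 → 0 < γ1 → 0 < γ2 →
        StrictAntiOn
          (fun t : ℝ => γ1 * (1 + γ2) / (((M : ℝ) - 1) * β1)
            + (γ2 / ((1 - t) ^ (M - 1) * β2)) * ∫ z in t..1, (1 - z) ^ (M - 2) / z)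
          (Ioo 0 1) :=
  cbnoma_Plo_strictAntiOn_general M
end

section
/- For all reals λ > 0 and 0 < τ < 1, lim_{M→∞} ∫_{λ·M^{1−τ}}^{M} (1 − y/M)^M / y dy = 0, where M ranges over the natural numbers. -/
open Filter

/-- for `0 < τ < 1`,
`∫_{λM^{1−τ}}^M (1 − y/M)^M / y dy → 0` as `M → ∞`. -/
theorem tendsto_integral_zero_of_tau_lt_one (lam τ : ℝ)
    (hlam : 0 < lam) (hτ0 : 0 < τ) (hτ1 : τ < 1) :
    Tendsto
      (fun M : ℕ => ∫ y in (lam * (M : ℝ) ^ (1 - τ))..(M : ℝ), (1 - y / (M : ℝ)) ^ M / y)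
      atTop (nhds 0) := by
  have h1τ : (0:ℝ) < 1 - τ := by linarith
  -- the dominating sequence
  set g : ℕ → ℝ := fun M => (M : ℝ) * Real.exp (-(lam * (M : ℝ) ^ (1 - τ))) with hg
  have hgt : Tendsto g atTop (nhds 0) := by
    have hreal : Tendsto (fun x : ℝ => x * Real.exp (-(lam * x ^ (1 - τ)))) atTop (nhds 0) := by
      have h1 : Tendsto (fun u : ℝ => u ^ (1 / (1 - τ)) * Real.exp (-lam * u)) atTop (nhds 0) :=
        tendsto_rpow_mul_exp_neg_mul_atTop_nhds_zero _ _ hlam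
      have h2 : Tendsto (fun x : ℝ => x ^ (1 - τ)) atTop atTop :=
        tendsto_rpow_atTop h1τ
      have h3 := h1.comp h2
      refine h3.congr' ?_
      filter_upwards [eventually_ge_atTop (0:ℝ)] with x hx
      simp only [Function.comp]
      rw [← Real.rpow_mul hx, mul_one_div, div_self (ne_of_gt h1τ), Real.rpow_one]
      ring_nf
    exact hreal.comp tendsto_natCast_atTop_atTop
  refine squeeze_zero_norm' ?_ hgt
  -- eventually: 1 ≤ a M and a M ≤ M
  have ha_tendsto : Tendsto (fun M : ℕ => lam * (M : ℝ) ^ (1 - τ)) atTop atTop :=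
    ((tendsto_rpow_atTop h1τ).const_mul_atTop hlam).comp tendsto_natCast_atTop_atTop
  have hτpow : Tendsto (fun M : ℕ => (M : ℝ) ^ τ) atTop atTop :=
    (tendsto_rpow_atTop hτ0).comp tendsto_natCast_atTop_atTop
  filter_upwards [ha_tendsto.eventually_ge_atTop 1, hτpow.eventually_ge_atTop lam,
    eventually_ge_atTop 1] with M ha1 hlM hM1
  set a := lam * (M : ℝ) ^ (1 - τ) with hadef
  have hMpos : (0:ℝ) < M := by exact_mod_cast Nat.lt_of_lt_of_le Nat.zero_lt_one hM1
  have haM : a ≤ M := by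
    have : a ≤ (M : ℝ) ^ τ * (M : ℝ) ^ (1 - τ) := by
      apply mul_le_mul_of_nonneg_right hlM (Real.rpow_nonneg hMpos.le _)
    calc a ≤ (M : ℝ) ^ τ * (M : ℝ) ^ (1 - τ) := this
      _ = (M : ℝ) ^ (τ + (1 - τ)) := (Real.rpow_add hMpos _ _).symm
      _ = (M : ℝ) := by norm_num
  have hbound : ‖∫ y in a..(M : ℝ), (1 - y / (M : ℝ)) ^ M / y‖ ≤
      Real.exp (-a) * |(M : ℝ) - a| := by
    apply intervalIntegral.norm_integral_le_of_norm_le_const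
    intro y hy
    rw [Set.uIoc_of_le haM] at hy
    obtain ⟨hy1, hy2⟩ := hy
    have hy0 : (1:ℝ) ≤ y := le_trans ha1 hy1.le
    have hnn : 0 ≤ 1 - y / M := by
      rw [sub_nonneg, div_le_one hMpos]; exact hy2
    have hstep : (1 - y / (M : ℝ)) ^ M ≤ Real.exp (-y) := by
      calc (1 - y / (M : ℝ)) ^ M ≤ (Real.exp (-(y / M))) ^ M := by
            apply pow_le_pow_left₀ hnn
            have := Real.add_one_le_exp (-(y / M))
            linarith
        _ = Real.exp (-(y / M) * M) := by rw [← Real.exp_nat_mul]; ring_nf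
        _ = Real.exp (-y) := by
            congr 1
            field_simp
    have hpos : 0 < y := lt_of_lt_of_le one_pos hy0
    rw [Real.norm_eq_abs, abs_div, abs_of_nonneg (pow_nonneg hnn _), abs_of_pos hpos]
    calc (1 - y / (M : ℝ)) ^ M / y ≤ (1 - y / (M : ℝ)) ^ M / 1 := by
          apply div_le_div_of_nonneg_left (pow_nonneg hnn _) one_pos hy0
      _ = (1 - y / (M : ℝ)) ^ M := div_one _
      _ ≤ Real.exp (-y) := hstep
      _ ≤ Real.exp (-a) := Real.exp_le_exp.mpr (by linarith)
  refine hbound.trans ?_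
  have ha0 : (0:ℝ) ≤ a := le_trans zero_le_one ha1
  rw [abs_of_nonneg (by linarith : (0:ℝ) ≤ (M:ℝ) - a)]
  have : Real.exp (-a) * ((M:ℝ) - a) ≤ Real.exp (-a) * (M:ℝ) :=
    mul_le_mul_of_nonneg_left (by linarith) (Real.exp_nonneg _)
  calc Real.exp (-a) * ((M:ℝ) - a) ≤ Real.exp (-a) * (M:ℝ) := this
    _ = g M := by rw [hg]; ring
end

section
/- For all reals λ > 0 and τ > 1, the integrals ∫_{λ·M^{1−τ}}^{M} (1 − y/M)^M / y dy tend to +∞ as the natural number M → ∞ (with M large enough that λ·M^{1−τ} < M). -/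
/-!
Near `y = 0` the integrand behaves like `1 / y`: by Bernoulli's inequality
`(1 - y / M) ^ M ≥ 1 - y ≥ 1 / 2` for `0 < y ≤ 1 / 2`, so the integral over `[a, 1 / 2]` is at least
`log (1 / (2 a)) / 2`, while the rest of the integrand is nonnegative. Since `τ > 1`, the lower
limit `a = λ M ^ (1 - τ)` tends to `0⁺`, and this logarithm diverges.
-/

open Filter Topology Real MeasureTheory intervalIntegral

lemma one_sub_le_one_sub_div_pow {n : ℕ} (hn : n ≠ 0) {y : ℝ} (hy : y ≤ 2 * n) :
    1 - y ≤ (1 - y / n) ^ n := by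
  have hn' : (0 : ℝ) < n := by positivity
  have h2 : -2 ≤ -(y / n) := by rw [neg_le_neg_iff, div_le_iff₀ hn']; linarith
  calc 1 - y = 1 + n * -(y / n) := by field_simp; ring
    _ ≤ (1 + -(y / n)) ^ n := one_add_mul_le_pow h2 n
    _ = (1 - y / n) ^ n := by rw [← sub_eq_add_neg]

lemma intervalIntegrable_div_self {f : ℝ → ℝ} (hf : Continuous f) {a b : ℝ} (ha : 0 < a)
    (hb : 0 < b) : IntervalIntegrable (fun y => f y / y) volume a b :=
  (hf.continuousOn.div continuousOn_id fun _ hy =>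
    (lt_min ha hb |>.trans_le hy.1).ne').intervalIntegrable

lemma integral_half_div_le_integral_one_sub_div_pow_div {n : ℕ} (hn : n ≠ 0) {a : ℝ}
    (ha : 0 < a) (ha' : a ≤ 1 / 2) :
    ∫ y in a..1 / 2, 1 / 2 / y ≤ ∫ y in a..1 / 2, (1 - y / n) ^ n / y := by
  refine integral_mono_on ha' (intervalIntegrable_div_self continuous_const ha one_half_pos)
    (intervalIntegrable_div_self (by fun_prop) ha one_half_pos) fun y ⟨hay, hy⟩ => ?_
  have hn1 : (1 : ℝ) ≤ n := by exact_mod_cast Nat.one_le_iff_ne_zero.mpr hn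
  have hbernoulli := one_sub_le_one_sub_div_pow hn (y := y) (by linarith)
  exact div_le_div_of_nonneg_right (by linarith) (ha.trans_le hay).le

lemma integral_half_div {a : ℝ} (ha : 0 < a) :
    ∫ y in a..1 / 2, 1 / 2 / y = 1 / 2 * log (1 / 2 / a) := by
  simp only [div_eq_mul_inv (1 / 2 : ℝ) _, intervalIntegral.integral_const_mul,
    integral_inv (Set.notMem_uIcc_of_lt ha one_half_pos)]

lemma integral_one_sub_div_pow_div_nonneg (n : ℕ) {b : ℝ} (hb : 0 < b) (hbn : b ≤ n) :
    0 ≤ ∫ y in b..n, (1 - y / n) ^ n / y := by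
  refine integral_nonneg hbn fun y ⟨hby, hyn⟩ => div_nonneg (pow_nonneg ?_ _) (hb.trans_le hby).le
  rw [sub_nonneg]
  exact div_le_one_of_le₀ hyn (hb.trans_le hbn).le

lemma log_half_div_le_integral_one_sub_div_pow_div {n : ℕ} (hn : n ≠ 0) {a : ℝ} (ha : 0 < a)
    (ha' : a ≤ 1 / 2) :
    1 / 2 * log (1 / 2 / a) ≤ ∫ y in a..n, (1 - y / n) ^ n / y := by
  have hn1 : (1 / 2 : ℝ) ≤ n := by
    have : (1 : ℝ) ≤ n := by exact_mod_cast Nat.one_le_iff_ne_zero.mpr hn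
    linarith
  have hf : Continuous fun y : ℝ => (1 - y / n) ^ n := by fun_prop
  rw [← integral_add_adjacent_intervals (intervalIntegrable_div_self hf ha one_half_pos)
    (intervalIntegrable_div_self hf one_half_pos (by linarith)), ← integral_half_div ha]
  linarith [integral_half_div_le_integral_one_sub_div_pow_div hn ha ha',
    integral_one_sub_div_pow_div_nonneg n one_half_pos hn1]

lemma tendsto_mul_natCast_rpow_nhdsGT_zero {lam s : ℝ} (hlam : 0 < lam) (hs : s < 0) :
    Tendsto (fun M : ℕ => lam * (M : ℝ) ^ s) atTop (𝓝[>] 0) := by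
  refine tendsto_nhdsWithin_iff.mpr ⟨?_, ?_⟩
  · have := (tendsto_rpow_neg_atTop (neg_pos.mpr hs)).comp tendsto_natCast_atTop_atTop
    simpa using this.const_mul lam
  · filter_upwards [eventually_gt_atTop 0] with M hM
    exact mul_pos hlam (rpow_pos_of_pos (Nat.cast_pos.mpr hM) s)

lemma tendsto_log_half_div_nhdsGT_zero :
    Tendsto (fun a : ℝ => 1 / 2 * log (1 / 2 / a)) (𝓝[>] 0) atTop := by
  simp_rw [div_eq_mul_inv (1 / 2 : ℝ)]
  exact (tendsto_log_atTop.comp (tendsto_inv_nhdsGT_zero.const_mul_atTop one_half_pos))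
    |>.const_mul_atTop one_half_pos

/-- for `τ > 1`,
`∫_{λM^{1−τ}}^M (1 − y/M)^M / y dy → +∞` as `M → ∞`. -/
theorem tendsto_integral_atTop_of_tau_gt_one (lam τ : ℝ)
    (hlam : 0 < lam) (hτ : 1 < τ) :
    Tendsto
      (fun M : ℕ => ∫ y in (lam * (M : ℝ) ^ (1 - τ))..(M : ℝ), (1 - y / (M : ℝ)) ^ M / y)
      atTop atTop := by
  have ha := tendsto_mul_natCast_rpow_nhdsGT_zero hlam (sub_neg.mpr hτ)
  refine tendsto_atTop_mono' _ ?_ (tendsto_log_half_div_nhdsGT_zero.comp ha)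
  filter_upwards [ha (Ioc_mem_nhdsGT one_half_pos), eventually_ne_atTop 0]
    with M ⟨hpos, hle⟩ hM
  exact log_half_div_le_integral_one_sub_div_pow_div hM hpos hle
end

section
/- Fix reals β1 ≥ β2 > 0 and γ1, γ2 > 0, let λ > 0, and for natural numbers M ≥ 2 set the threshold t_M = λ/M (assume M > λ so t_M < 1). Then P̃_lo evaluated at t_M converges: γ1(1+γ2)/((M−1)·β1) + (γ2/((1−λ/M)^(M−1)·β2))·∫_{λ/M}^1 (1−z)^(M−2)/z dz → (γ2/β2)·e^{λ}·∫_{λ}^{∞} e^{−y}/y dy as M → ∞. In particular, the limit equals (γ2/β2)·e^λ·E₁(λ), depends only on the weaker user's parameters γ2 and β2, and the corresponding outage probability 1 − (1−λ/M)^{M−1} tends to 1 − e^{−λ}. -/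
open Filter MeasureTheory Set

private lemma pow_lim_gen (t : ℝ) (ht : 0 < t) (k : ℕ) :
    Tendsto (fun M : ℕ => (1 - t / (M : ℝ)) ^ (M - k)) atTop (nhds (Real.exp (-t))) := by
  have hbase : Tendsto (fun M : ℕ => 1 - t / (M : ℝ)) atTop (nhds 1) := by
    simpa using (tendsto_const_div_atTop_nhds_zero_nat t).const_sub 1
  have h1 : Tendsto (fun M : ℕ => (1 - t / (M : ℝ)) ^ M) atTop (nhds (Real.exp (-t))) := by
    have := Real.tendsto_one_add_div_pow_exp (-t)
    simpa [sub_eq_add_neg, neg_div] using this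
  have h2 : Tendsto (fun M : ℕ => ((1 - t / (M : ℝ)) ^ k)⁻¹) atTop (nhds 1) := by
    have := (hbase.pow k).inv₀ (by simp)
    simpa using this
  have h3 := h1.mul h2
  rw [mul_one] at h3
  apply h3.congr'
  filter_upwards [eventually_gt_atTop (max k ⌈t⌉₊)] with M hM
  have hk : k ≤ M := le_of_lt (lt_of_le_of_lt (le_max_left _ _) hM)
  have hMt : t < (M : ℝ) := by
    calc t ≤ (⌈t⌉₊ : ℝ) := Nat.le_ceil t
    _ < M := by exact_mod_cast lt_of_le_of_lt (le_max_right k _) hM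
  have hMpos : (0:ℝ) < M := lt_trans ht hMt
  have hne : 1 - t / (M : ℝ) ≠ 0 := by
    have : t / (M : ℝ) < 1 := (div_lt_one hMpos).mpr hMt
    linarith
  rw [pow_sub₀ _ hne hk]

private lemma integral_lim (lam : ℝ) (hlam : 0 < lam) :
    Tendsto (fun M : ℕ => ∫ z in (lam / (M : ℝ))..1, (1 - z) ^ (M - 2) / z) atTop
      (nhds (∫ y in Ioi lam, Real.exp (-y) / y)) := by
  set F : ℕ → ℝ → ℝ := fun M y =>
    (Ioc lam (M : ℝ)).indicator (fun y => (1 - y / (M : ℝ)) ^ (M - 2) / y) y with hF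
  have key : Tendsto (fun M : ℕ => ∫ y in Ioi lam, F M y) atTop
      (nhds (∫ y in Ioi lam, Real.exp (-y) / y)) := by
    apply tendsto_integral_filter_of_dominated_convergence
      (fun y => Real.exp (-(1/2) * y) / lam)
    · filter_upwards with M
      apply Measurable.aestronglyMeasurable
      apply Measurable.indicator _ measurableSet_Ioc
      fun_prop
    · filter_upwards [eventually_ge_atTop 4] with M hM4
      filter_upwards with y
      simp only [hF]
      by_cases hy : y ∈ Ioc lam (M : ℝ)
      · rw [indicator_of_mem hy]
        obtain ⟨hy1, hy2⟩ := hy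
        have hy0 : 0 < y := lt_trans hlam hy1
        have hM0 : (0:ℝ) < M := lt_of_lt_of_le hy0 hy2
        have hb0 : 0 ≤ 1 - y / (M:ℝ) := by
          have : y / (M:ℝ) ≤ 1 := (div_le_one hM0).mpr hy2
          linarith
        have hpow : (1 - y / (M:ℝ)) ^ (M - 2) ≤ Real.exp (-(1/2) * y) := by
          calc (1 - y / (M:ℝ)) ^ (M - 2) ≤ (Real.exp (-(y / M))) ^ (M - 2) := by
                apply pow_le_pow_left₀ hb0
                have := Real.add_one_le_exp (-(y / (M:ℝ)))
                linarith
            _ = Real.exp (-(y / M) * (M - 2 : ℕ)) := by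
                rw [← Real.exp_nat_mul]; ring_nf
            _ ≤ Real.exp (-(1/2) * y) := by
                apply Real.exp_le_exp.mpr
                have h2M : ((M - 2 : ℕ) : ℝ) = (M : ℝ) - 2 := by
                  have : (2:ℕ) ≤ M := le_trans (by norm_num) hM4
                  push_cast [this]; ring
                rw [h2M]
                have hM4' : (4:ℝ) ≤ M := by exact_mod_cast hM4
                have hdiv : y / (M:ℝ) * (M:ℝ) = y := div_mul_cancel₀ y (ne_of_gt hM0)
                have hd0 : 0 ≤ y / (M:ℝ) := by positivity
                nlinarith [hy0.le]
        have : (1 - y / (M:ℝ)) ^ (M - 2) / y ≤ Real.exp (-(1/2) * y) / lam := by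
          apply div_le_div₀ (Real.exp_pos _).le hpow hlam hy1.le
        rw [Real.norm_eq_abs, abs_of_nonneg (by positivity)]
        exact this
      · rw [indicator_of_notMem hy]
        simp only [norm_zero]
        positivity
    · exact (exp_neg_integrableOn_Ioi lam (by norm_num : (0:ℝ) < 1/2)).div_const lam
    · filter_upwards [ae_restrict_mem measurableSet_Ioi] with y hy
      have hy0 : 0 < y := lt_trans hlam hy
      have := (pow_lim_gen y hy0 2).div_const y
      apply this.congr'
      filter_upwards [eventually_ge_atTop ⌈y⌉₊] with M hM
      have hyM : y ≤ (M : ℝ) := le_trans (Nat.le_ceil y) (by exact_mod_cast hM)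
      simp only [hF]
      have hmem : y ∈ Ioc lam (M:ℝ) := ⟨hy, hyM⟩
      exact (indicator_of_mem hmem (fun z => (1 - z / (M:ℝ)) ^ (M - 2) / z)).symm
  apply key.congr'
  filter_upwards [eventually_gt_atTop ⌈lam⌉₊, eventually_ge_atTop 1] with M hM hM1
  have hMlam : lam < (M : ℝ) := lt_of_le_of_lt (Nat.le_ceil lam) (by exact_mod_cast hM)
  have hM0 : (0:ℝ) < M := lt_trans hlam hMlam
  have hMne : (M : ℝ) ≠ 0 := ne_of_gt hM0
  -- change of variables
  have hsub : (∫ z in (lam / (M : ℝ))..1, (1 - z) ^ (M - 2) / z)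
      = ∫ x in lam..(M:ℝ), (1 - x / (M:ℝ)) ^ (M - 2) / x := by
    have := intervalIntegral.inv_smul_integral_comp_div
      (f := fun z => (1 - z) ^ (M - 2) / z) (a := lam) (b := (M:ℝ)) (M:ℝ)
    rw [div_self hMne] at this
    rw [← this]
    have heq : ∀ x : ℝ, (1 - x / (M:ℝ)) ^ (M - 2) / (x / (M:ℝ))
        = (M:ℝ) * ((1 - x / (M:ℝ)) ^ (M - 2) / x) := by
      intro x
      rw [div_div_eq_mul_div]
      ring
    simp only [heq]
    rw [intervalIntegral.integral_const_mul, smul_eq_mul, ← mul_assoc,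
      inv_mul_cancel₀ hMne, one_mul]
  rw [hsub, intervalIntegral.integral_of_le hMlam.le]
  simp only [hF]
  rw [integral_indicator measurableSet_Ioc, Measure.restrict_restrict measurableSet_Ioc]
  congr 1
  rw [inter_eq_left.mpr Ioc_subset_Ioi_self]

/-- with threshold `t_M = λ/M`, the power approximation `P̃_lo(t_M)`
converges to `(γ2/β2)·e^λ·E₁(λ)` (depending only on the weaker user's parameters),
and the outage probability `1 − (1 − λ/M)^{M−1}` tends to `1 − e^{−λ}`. -/
theorem cbnoma_tradeoff_tau_eq_one (β1 β2 γ1 γ2 lam : ℝ)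
    (hβ : β2 ≤ β1) (hβ2 : 0 < β2) (hγ1 : 0 < γ1) (hγ2 : 0 < γ2) (hlam : 0 < lam) :
    Tendsto
      (fun M : ℕ => γ1 * (1 + γ2) / (((M : ℝ) - 1) * β1)
        + (γ2 / ((1 - lam / (M : ℝ)) ^ (M - 1) * β2))
          * ∫ z in (lam / (M : ℝ))..1, (1 - z) ^ (M - 2) / z)
      atTop
      (nhds ((γ2 / β2) * Real.exp lam * ∫ y in Ioi lam, Real.exp (-y) / y))
    ∧ Tendsto (fun M : ℕ => 1 - (1 - lam / (M : ℝ)) ^ (M - 1)) atTop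
        (nhds (1 - Real.exp (-lam))) := by
  have hβ1 : 0 < β1 := lt_of_lt_of_le hβ2 hβ
  have hp := pow_lim_gen lam hlam 1
  constructor
  · have h1 : Tendsto (fun M : ℕ => γ1 * (1 + γ2) / (((M : ℝ) - 1) * β1)) atTop (nhds 0) := by
      apply Tendsto.div_atTop tendsto_const_nhds
      apply Tendsto.atTop_mul_const hβ1
      have : Tendsto (fun M : ℕ => (M : ℝ) + (-1)) atTop atTop :=
        tendsto_atTop_add_const_right atTop (-1) tendsto_natCast_atTop_atTop
      simpa [sub_eq_add_neg] using this
    have hden : Tendsto (fun M : ℕ => (1 - lam / (M : ℝ)) ^ (M - 1) * β2) atTop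
        (nhds (Real.exp (-lam) * β2)) := hp.mul_const β2
    have hdne : Real.exp (-lam) * β2 ≠ 0 := by positivity
    have h2 : Tendsto (fun M : ℕ => (γ2 / ((1 - lam / (M : ℝ)) ^ (M - 1) * β2))
        * ∫ z in (lam / (M : ℝ))..1, (1 - z) ^ (M - 2) / z) atTop
        (nhds ((γ2 / (Real.exp (-lam) * β2)) * ∫ y in Ioi lam, Real.exp (-y) / y)) :=
      (tendsto_const_nhds.div hden hdne).mul (integral_lim lam hlam)
    have h3 := h1.add h2
    rw [zero_add] at h3
    convert h3 using 2
    rw [Real.exp_neg]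
    field_simp
  · exact tendsto_const_nhds.sub hp
end

section
/- Fix reals β1 ≥ β2 > 0 and γ1, γ2 > 0, let λ > 0 and 0 < τ < 1, and for natural numbers M ≥ 2 set the threshold t_M = λ/M^τ (assume M large enough that t_M < 1). Then P̃_lo evaluated at t_M tends to 0: γ1(1+γ2)/((M−1)·β1) + (γ2/((1−λ/M^τ)^(M−1)·β2))·∫_{λ/M^τ}^1 (1−z)^(M−2)/z dz → 0 as M → ∞. -/
open Filter Real intervalIntegral


lemma key_int (n : ℕ) (hn : 2 ≤ n) (t : ℝ) (ht0 : 0 < t) (ht1 : t < 1) :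
    ∫ z in t..1, (1 - z) ^ (n - 2) / z ≤ (1 - t) ^ (n - 1) / (((n : ℝ) - 1) * t) := by
  have htle : t ≤ 1 := ht1.le
  have hcont : ContinuousOn (fun z : ℝ => (1 - z) ^ (n - 2) / z) (Set.Icc t 1) := by
    apply ContinuousOn.div (by fun_prop) continuousOn_id
    intro x hx; exact ne_of_gt (lt_of_lt_of_le ht0 hx.1)
  have hint1 : IntervalIntegrable (fun z : ℝ => (1 - z) ^ (n - 2) / z)
      MeasureTheory.volume t 1 := by
    apply ContinuousOn.intervalIntegrable
    rwa [Set.uIcc_of_le htle]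
  have hint2 : IntervalIntegrable (fun z : ℝ => (1 - z) ^ (n - 2) / t)
      MeasureTheory.volume t 1 :=
    (((continuous_const.sub continuous_id).pow _).div_const t).intervalIntegrable _ _
  have hmono : ∫ z in t..1, (1 - z) ^ (n - 2) / z ≤ ∫ z in t..1, (1 - z) ^ (n - 2) / t := by
    apply intervalIntegral.integral_mono_on htle hint1 hint2
    intro x hx
    have hx0 : 0 < x := lt_of_lt_of_le ht0 hx.1
    have h1x : (0:ℝ) ≤ 1 - x := by linarith [hx.2]
    exact div_le_div_of_nonneg_left (pow_nonneg h1x _) ht0 hx.1 |>.trans_eq rfl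
  refine hmono.trans_eq ?_
  rw [intervalIntegral.integral_div]
  have hI : ∫ z in t..1, (1 - z) ^ (n - 2) = (1 - t) ^ (n - 1) / ((n : ℝ) - 1) := by
    rw [show (fun z : ℝ => (1 - z) ^ (n - 2)) = (fun z : ℝ => ((fun u : ℝ => u ^ (n - 2)) (1 - z))) from rfl,
      intervalIntegral.integral_comp_sub_left (fun u : ℝ => u ^ (n - 2)) 1, sub_self,
      integral_pow]
    have h0 : (0:ℝ) ^ (n - 2 + 1) = 0 := zero_pow (by omega)
    rw [h0, sub_zero]
    have h21 : n - 2 + 1 = n - 1 := by omega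
    rw [h21]
    congr 1
    have : ((n - 2 : ℕ) : ℝ) = (n : ℝ) - 2 := by
      rw [Nat.cast_sub (by omega)]; norm_num
    rw [this]; ring
  rw [hI, div_div]

lemma key_nonneg (n : ℕ) (t : ℝ) (ht0 : 0 < t) (ht1 : t ≤ 1) :
    0 ≤ ∫ z in t..1, (1 - z) ^ (n - 2) / z := by
  apply intervalIntegral.integral_nonneg ht1
  intro x hx
  exact div_nonneg (pow_nonneg (by linarith [hx.2]) _) (lt_of_lt_of_le ht0 hx.1).le

lemma ratio_tendsto (τ : ℝ) (hτ0 : 0 < τ) (hτ1 : τ < 1) :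
    Tendsto (fun M : ℕ => (M : ℝ) ^ τ / ((M : ℝ) - 1)) atTop (nhds 0) := by
  have hbase : Tendsto (fun M : ℕ => (M : ℝ) ^ (τ - 1)) atTop (nhds 0) := by
    have := (tendsto_rpow_neg_atTop (y := 1 - τ) (by linarith)).comp
      tendsto_natCast_atTop_atTop (α := ℕ)
    exact this.congr fun x => by rw [Function.comp, neg_sub]
  have hg : Tendsto (fun M : ℕ => 2 * (M : ℝ) ^ (τ - 1)) atTop (nhds 0) := by
    simpa using hbase.const_mul 2
  apply squeeze_zero' ?_ ?_ hg
  · filter_upwards [eventually_ge_atTop 2] with M hM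
    have hM2 : (2:ℝ) ≤ (M:ℝ) := by exact_mod_cast hM
    exact div_nonneg (Real.rpow_nonneg (by linarith) _) (by linarith)
  · filter_upwards [eventually_ge_atTop 2] with M hM
    have hM2 : (2:ℝ) ≤ (M:ℝ) := by exact_mod_cast hM
    have hM0 : (0:ℝ) < M := by linarith
    have hMτ : (0:ℝ) < (M:ℝ) ^ τ := Real.rpow_pos_of_pos hM0 τ
    rw [Real.rpow_sub_one hM0.ne', mul_div_assoc',
      div_le_div_iff₀ (by linarith) hM0]
    nlinarith

/-- with threshold `t_M = λ/M^τ` and `0 < τ < 1`, the power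
approximation `P̃_lo(t_M)` tends to `0` as `M → ∞`. -/
theorem cbnoma_power_vanishes_tau_lt_one (β1 β2 γ1 γ2 lam τ : ℝ)
    (hβ : β2 ≤ β1) (hβ2 : 0 < β2) (hγ1 : 0 < γ1) (hγ2 : 0 < γ2)
    (hlam : 0 < lam) (hτ0 : 0 < τ) (hτ1 : τ < 1) :
    Tendsto
      (fun M : ℕ => γ1 * (1 + γ2) / (((M : ℝ) - 1) * β1)
        + (γ2 / ((1 - lam / (M : ℝ) ^ τ) ^ (M - 1) * β2))
          * ∫ z in (lam / (M : ℝ) ^ τ)..1, (1 - z) ^ (M - 2) / z)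
      atTop (nhds 0) := by
  have hβ1 : 0 < β1 := lt_of_lt_of_le hβ2 hβ
  have hM1 : Tendsto (fun M : ℕ => (M : ℝ) - 1) atTop atTop := by
    simpa [sub_eq_add_neg] using
      tendsto_atTop_add_const_right atTop (-1) (tendsto_natCast_atTop_atTop : Tendsto (Nat.cast : ℕ → ℝ) atTop atTop)
  have h1 : Tendsto (fun M : ℕ => γ1 * (1 + γ2) / (((M : ℝ) - 1) * β1)) atTop (nhds 0) :=
    Tendsto.div_atTop tendsto_const_nhds (hM1.atTop_mul_const hβ1)
  have hev : ∀ᶠ M : ℕ in atTop, lam < (M : ℝ) ^ τ :=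
    ((tendsto_rpow_atTop hτ0).comp (tendsto_natCast_atTop_atTop : Tendsto (Nat.cast : ℕ → ℝ) atTop atTop)).eventually_gt_atTop lam
  have h2 : Tendsto (fun M : ℕ => (γ2 / ((1 - lam / (M : ℝ) ^ τ) ^ (M - 1) * β2))
      * ∫ z in (lam / (M : ℝ) ^ τ)..1, (1 - z) ^ (M - 2) / z) atTop (nhds 0) := by
    have hg : Tendsto (fun M : ℕ => (γ2 / (β2 * lam)) * ((M : ℝ) ^ τ / ((M : ℝ) - 1)))
        atTop (nhds 0) := by
      simpa using (ratio_tendsto τ hτ0 hτ1).const_mul (γ2 / (β2 * lam))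
    apply squeeze_zero' ?_ ?_ hg
    · filter_upwards [eventually_ge_atTop 2, hev] with M hM hlt
      have hM2 : (2:ℝ) ≤ (M:ℝ) := by exact_mod_cast hM
      have hMτ : (0:ℝ) < (M:ℝ) ^ τ := lt_trans hlam hlt
      have ht0 : 0 < lam / (M:ℝ) ^ τ := div_pos hlam hMτ
      have ht1 : lam / (M:ℝ) ^ τ < 1 := (div_lt_one hMτ).mpr hlt
      exact mul_nonneg (div_nonneg hγ2.le (mul_nonneg (pow_nonneg (by linarith) _) hβ2.le))
        (key_nonneg _ _ ht0 ht1.le)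
    · filter_upwards [eventually_ge_atTop 2, hev] with M hM hlt
      have hM2 : (2:ℝ) ≤ (M:ℝ) := by exact_mod_cast hM
      have hMτ : (0:ℝ) < (M:ℝ) ^ τ := lt_trans hlam hlt
      set t : ℝ := lam / (M:ℝ) ^ τ with ht
      have ht0 : 0 < t := div_pos hlam hMτ
      have ht1 : t < 1 := (div_lt_one hMτ).mpr hlt
      have hp : (0:ℝ) < (1 - t) ^ (M - 1) := pow_pos (by linarith) _
      have hc : 0 ≤ γ2 / ((1 - t) ^ (M - 1) * β2) :=
        div_nonneg hγ2.le (mul_nonneg hp.le hβ2.le)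
      have hkey := key_int M hM t ht0 ht1
      calc (γ2 / ((1 - t) ^ (M - 1) * β2)) * ∫ z in t..1, (1 - z) ^ (M - 2) / z
          ≤ (γ2 / ((1 - t) ^ (M - 1) * β2)) * ((1 - t) ^ (M - 1) / (((M:ℝ) - 1) * t)) :=
            mul_le_mul_of_nonneg_left hkey hc
        _ = γ2 / (β2 * (((M:ℝ) - 1) * t)) := by
            have hB : ((M:ℝ) - 1) * t ≠ 0 := mul_ne_zero (by linarith) ht0.ne'
            field_simp [hp.ne']
        _ = (γ2 / (β2 * lam)) * ((M : ℝ) ^ τ / ((M : ℝ) - 1)) := by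
            rw [ht]
            have h1 : ((M:ℝ) - 1) ≠ 0 := by linarith
            field_simp
  simpa using h1.add h2
end

section
/- Fix reals β1 ≥ β2 > 0 and γ1, γ2 > 0, let λ > 0 and τ > 1, and for natural numbers M ≥ 2 set the threshold t_M = λ/M^τ (assume M large enough that t_M < 1). Then P̃_lo evaluated at t_M tends to +∞: γ1(1+γ2)/((M−1)·β1) + (γ2/((1−λ/M^τ)^(M−1)·β2))·∫_{λ/M^τ}^1 (1−z)^(M−2)/z dz → +∞ as M → ∞. -/
open Filter

/-- with threshold `t_M = λ/M^τ` and `τ > 1`, the power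
approximation `P̃_lo(t_M)` tends to `+∞` as `M → ∞`. -/
theorem cbnoma_power_diverges_tau_gt_one (β1 β2 γ1 γ2 lam τ : ℝ)
    (hβ : β2 ≤ β1) (hβ2 : 0 < β2) (hγ1 : 0 < γ1) (hγ2 : 0 < γ2)
    (hlam : 0 < lam) (hτ : 1 < τ) :
    Tendsto
      (fun M : ℕ => γ1 * (1 + γ2) / (((M : ℝ) - 1) * β1)
        + (γ2 / ((1 - lam / (M : ℝ) ^ τ) ^ (M - 1) * β2))
          * ∫ z in (lam / (M : ℝ) ^ τ)..1, (1 - z) ^ (M - 2) / z)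
      atTop atTop := by
  have hβ1 : 0 < β1 := lt_of_lt_of_le hβ2 hβ
  have hτ1 : 0 < τ - 1 := by linarith
  -- the lower bound function tends to infinity
  have hlow : Tendsto
      (fun M : ℕ => γ2 / β2 * (((τ - 1) * Real.log (M : ℝ) - Real.log (2 * lam)) / 2))
      atTop atTop := by
    have h1 : Tendsto (fun M : ℕ => Real.log (M : ℝ)) atTop atTop :=
      Real.tendsto_log_atTop.comp tendsto_natCast_atTop_atTop
    have h2 := h1.const_mul_atTop hτ1
    have h3 := tendsto_atTop_add_const_right atTop (-Real.log (2 * lam)) h2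
    have h4 := h3.atTop_div_const (by norm_num : (0:ℝ) < 2)
    have h5 := h4.const_mul_atTop (div_pos hγ2 hβ2)
    simpa [sub_eq_add_neg] using h5
  -- eventually, x^(τ-1) ≥ 2λ
  have hev : ∀ᶠ M : ℕ in atTop, 2 * lam ≤ (M : ℝ) ^ (τ - 1) := by
    have : Tendsto (fun M : ℕ => (M : ℝ) ^ (τ - 1)) atTop atTop :=
      (tendsto_rpow_atTop hτ1).comp tendsto_natCast_atTop_atTop
    exact this.eventually_ge_atTop (2 * lam)
  refine tendsto_atTop_mono' atTop ?_ hlow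
  filter_upwards [hev, eventually_ge_atTop 2] with M hMl hM2
  set x : ℝ := (M : ℝ) with hxdef
  have hx2 : (2 : ℝ) ≤ x := by rw [hxdef]; exact_mod_cast hM2
  have hx0 : 0 < x := by linarith
  have hxτ : 0 < x ^ τ := Real.rpow_pos_of_pos hx0 τ
  set t : ℝ := lam / x ^ τ with htdef
  set s : ℝ := 1 / (2 * x) with hsdef
  have ht0 : 0 < t := div_pos hlam hxτ
  have hs0 : 0 < s := by positivity
  -- x^τ = x^(τ-1) * x
  have hxτ_eq : x ^ τ = x ^ (τ - 1) * x := by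
    rw [show τ = (τ - 1) + 1 by ring, Real.rpow_add hx0, Real.rpow_one]
    ring_nf
  have hts : t ≤ s := by
    rw [htdef, hsdef, div_le_div_iff₀ hxτ (by positivity), one_mul, hxτ_eq]
    nlinarith
  have hs14 : s ≤ 1 / 4 := by
    rw [hsdef, div_le_div_iff₀ (by positivity) (by norm_num)]
    linarith
  have ht1 : t < 1 := by linarith
  have hs1 : s ≤ 1 := by linarith
  -- the integrand
  set g : ℝ → ℝ := fun z => (1 - z) ^ (M - 2) / z with hgdef
  have hgcont : ContinuousOn g (Set.Ici t) := by
    apply ContinuousOn.div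
    · exact (continuousOn_const.sub continuousOn_id).pow _
    · exact continuousOn_id
    · intro z hz
      exact ne_of_gt (lt_of_lt_of_le ht0 hz)
  have hint1 : IntervalIntegrable g MeasureTheory.volume t s :=
    (hgcont.mono (by rw [Set.uIcc_of_le hts]; exact Set.Icc_subset_Ici_self)).intervalIntegrable
  have hint2 : IntervalIntegrable g MeasureTheory.volume s 1 :=
    (hgcont.mono (by rw [Set.uIcc_of_le hs1]; intro z hz; exact le_trans hts hz.1)).intervalIntegrable
  -- lower bound for the integral on [t, s]
  have hbern : ∀ z ∈ Set.Icc t s, 1 / 2 * (1 / z) ≤ g z := by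
    intro z hz
    have hz0 : 0 < z := lt_of_lt_of_le ht0 hz.1
    have hzs : z ≤ s := hz.2
    have hpow : (1 : ℝ) / 2 ≤ (1 - z) ^ (M - 2) := by
      have hb := one_add_mul_le_pow (a := -z) (by linarith : (-2 : ℝ) ≤ -z) (M - 2)
      have hcast : ((M - 2 : ℕ) : ℝ) ≤ x := by
        rw [hxdef]; exact_mod_cast Nat.cast_le.mpr (Nat.sub_le M 2)
      have hzx : ((M - 2 : ℕ) : ℝ) * z ≤ 1 / 2 := by
        have : ((M - 2 : ℕ) : ℝ) * z ≤ x * s := by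
          apply mul_le_mul hcast hzs (le_of_lt hz0) (le_of_lt hx0)
        have hxs : x * s = 1 / 2 := by
          rw [hsdef]; field_simp
        linarith
      have : 1 + ((M - 2 : ℕ) : ℝ) * (-z) ≤ (1 + -z) ^ (M - 2) := hb
      have h12 : (1 : ℝ) / 2 ≤ 1 + ((M - 2 : ℕ) : ℝ) * (-z) := by
        have := hzx; nlinarith
      calc (1 : ℝ) / 2 ≤ 1 + ((M - 2 : ℕ) : ℝ) * (-z) := h12
        _ ≤ (1 + -z) ^ (M - 2) := hb
        _ = (1 - z) ^ (M - 2) := by ring_nf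
    rw [hgdef]
    simp only
    have heq : 1 / 2 * (1 / z) = (1 / 2 : ℝ) / z := by ring
    rw [heq, div_le_div_iff₀ hz0 hz0]
    nlinarith
  have hIlow : 1 / 2 * Real.log (s / t) ≤ ∫ z in t..s, g z := by
    have hint_inv : IntervalIntegrable (fun z => 1 / 2 * (1 / z)) MeasureTheory.volume t s := by
      apply ContinuousOn.intervalIntegrable
      apply ContinuousOn.mul continuousOn_const
      apply ContinuousOn.div continuousOn_const continuousOn_id
      intro z hz
      rw [Set.uIcc_of_le hts] at hz
      exact ne_of_gt (lt_of_lt_of_le ht0 hz.1)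
    have hmono := intervalIntegral.integral_mono_on hts hint_inv hint1 hbern
    have heval : ∫ z in t..s, 1 / 2 * (1 / z) = 1 / 2 * Real.log (s / t) := by
      rw [intervalIntegral.integral_const_mul, integral_one_div]
      rw [Set.uIcc_of_le hts]
      intro hc
      exact absurd hc.1 (not_le.mpr ht0)
    rw [heval] at hmono
    exact hmono
  have hI2 : 0 ≤ ∫ z in s..1, g z := by
    apply intervalIntegral.integral_nonneg hs1
    intro z hz
    have hz0 : 0 < z := lt_of_lt_of_le hs0 hz.1
    have hz1 : z ≤ 1 := hz.2
    apply div_nonneg _ (le_of_lt hz0)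
    exact pow_nonneg (by linarith) _
  have hIsplit : (∫ z in t..1, g z) = (∫ z in t..s, g z) + ∫ z in s..1, g z :=
    (intervalIntegral.integral_add_adjacent_intervals hint1 hint2).symm
  -- value of log(s/t)
  have hst : s / t = x ^ (τ - 1) / (2 * lam) := by
    rw [hsdef, htdef, hxτ_eq]
    field_simp
  have hlog_nonneg : 0 ≤ Real.log (s / t) := by
    rw [hst]
    apply Real.log_nonneg
    rw [le_div_iff₀ (by positivity)]
    linarith
  have hIlow' : ((τ - 1) * Real.log x - Real.log (2 * lam)) / 2 ≤ ∫ z in t..1, g z := by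
    have hlogeq : Real.log (s / t) = (τ - 1) * Real.log x - Real.log (2 * lam) := by
      rw [hst, Real.log_div (by positivity) (by positivity), Real.log_rpow hx0]
    rw [hIsplit]
    have : 1 / 2 * Real.log (s / t) = ((τ - 1) * Real.log x - Real.log (2 * lam)) / 2 := by
      rw [hlogeq]; ring
    linarith
  have hInonneg : 0 ≤ ∫ z in t..1, g z := by
    have : 0 ≤ ((τ - 1) * Real.log x - Real.log (2 * lam)) / 2 := by
      have : 1 / 2 * Real.log (s / t) = ((τ - 1) * Real.log x - Real.log (2 * lam)) / 2 := by
        rw [hst, Real.log_div (by positivity) (by positivity), Real.log_rpow hx0]; ring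
      rw [← this]
      linarith [hlog_nonneg]
    linarith
  -- the coefficient bound
  have hpow01 : 0 < (1 - t) ^ (M - 1) ∧ (1 - t) ^ (M - 1) ≤ 1 := by
    constructor
    · exact pow_pos (by linarith) _
    · exact pow_le_one₀ (by linarith) (by linarith)
  have hcoef : γ2 / β2 ≤ γ2 / ((1 - t) ^ (M - 1) * β2) := by
    have hd : 0 < (1 - t) ^ (M - 1) * β2 := mul_pos hpow01.1 hβ2
    rw [div_le_div_iff₀ hβ2 hd]
    have h1 : (1 - t) ^ (M - 1) * β2 ≤ β2 := by
      calc (1 - t) ^ (M - 1) * β2 ≤ 1 * β2 :=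
            mul_le_mul_of_nonneg_right hpow01.2 hβ2.le
        _ = β2 := one_mul _
    exact mul_le_mul_of_nonneg_left h1 hγ2.le
  -- first term nonneg
  have hA : 0 ≤ γ1 * (1 + γ2) / ((x - 1) * β1) := by
    apply div_nonneg (by positivity)
    apply mul_nonneg (by linarith) (le_of_lt hβ1)
  -- assemble
  calc γ2 / β2 * (((τ - 1) * Real.log x - Real.log (2 * lam)) / 2)
      ≤ γ2 / ((1 - t) ^ (M - 1) * β2) * ∫ z in t..1, g z := by
        apply mul_le_mul hcoef hIlow' _ (le_of_lt (div_pos hγ2 (mul_pos hpow01.1 hβ2)))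
        have hlogeq : 1 / 2 * Real.log (s / t)
            = ((τ - 1) * Real.log x - Real.log (2 * lam)) / 2 := by
          rw [hst, Real.log_div (by positivity) (by positivity), Real.log_rpow hx0]; ring
        rw [← hlogeq]
        linarith [hlog_nonneg]
    _ ≤ γ1 * (1 + γ2) / ((x - 1) * β1)
        + γ2 / ((1 - t) ^ (M - 1) * β2) * ∫ z in t..1, g z := by linarith
end
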